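/- Let E and F be real inner product spaces, let W ⊆ E be a finite-dimensional subspace, let v₁, …, v_t ∈ E, let 0 ≤ ε ≤ 1/2, and let T : E → F be a linear map such that for every i ∈ {1,…,t}, T is an ε-isometry on the subspace W + span{vᵢ}. Then | Σ_{i=1}^t ‖P_{T(W)}(T vᵢ)‖² − Σ_{i=1}^t ‖P_W(vᵢ)‖² | ≤ 27ε · Σ_{i=1}^t ‖vᵢ‖², where P_W and P_{T(W)} denote the orthogonal projections onto W and onto the image subspace T(W), respectively. -/

import Mathlib

/-!
Write `d = ‖v - P_W v‖` and `d' = ‖T v - P_{T(W)} (T v)‖`. By Pythagoras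
`‖P_{T(W)} (T v)‖² - ‖P_W v‖² = (‖T v‖² - ‖v‖²) - (d'² - d²)`. The vectors `v` and `v - w` (`w ∈ W`) lie in
`W + span {v}`, where `T` is an `ε`-isometry, and distances to a subspace are minimal distances,
so `(1 - ε) d ≤ d' ≤ (1 + ε) d` as well as `(1 - ε) ‖v‖ ≤ ‖T v‖ ≤ (1 + ε) ‖v‖`. Each bracket is
therefore at most `3ε ‖v‖²` in absolute value, and summing over the columns gives the claim.
-/

open Submodule

theorem abs_sq_sub_sq_le_of_mul_le_of_le_mul {ε a b : ℝ} (hε0 : 0 ≤ ε) (hε1 : ε ≤ 1)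
    (ha : 0 ≤ a) (hlow : (1 - ε) * a ≤ b) (hup : b ≤ (1 + ε) * a) :
    |b ^ 2 - a ^ 2| ≤ 3 * ε * a ^ 2 := by
  have hb : 0 ≤ b := le_trans (mul_nonneg (by linarith) ha) hlow
  have hεsq : ε ^ 2 * a ^ 2 ≤ ε * a ^ 2 := by
    gcongr
    nlinarith
  have hsq_up : b ^ 2 ≤ ((1 + ε) * a) ^ 2 := pow_le_pow_left₀ hb hup 2
  have hsq_low : ((1 - ε) * a) ^ 2 ≤ b ^ 2 :=
    pow_le_pow_left₀ (mul_nonneg (by linarith) ha) hlow 2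
  rw [abs_le]
  constructor <;> nlinarith [mul_nonneg hε0 (sq_nonneg a)]

theorem Submodule.norm_sub_starProjection_le {𝕜 E : Type*} [RCLike 𝕜] [NormedAddCommGroup E]
    [InnerProductSpace 𝕜 E] (K : Submodule 𝕜 E) [K.HasOrthogonalProjection] (y : E) {x : E}
    (hx : x ∈ K) : ‖y - K.starProjection y‖ ≤ ‖y - x‖ := by
  rw [starProjection_minimal]
  exact ciInf_le ⟨0, by rintro _ ⟨z, rfl⟩; positivity⟩ (⟨x, hx⟩ : K)

theorem Submodule.norm_sq_eq_norm_starProjection_sq_add {𝕜 E : Type*} [RCLike 𝕜]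
    [NormedAddCommGroup E] [InnerProductSpace 𝕜 E] (K : Submodule 𝕜 E)
    [K.HasOrthogonalProjection] (y : E) :
    ‖y‖ ^ 2 = ‖K.starProjection y‖ ^ 2 + ‖y - K.starProjection y‖ ^ 2 := by
  simpa [starProjection_orthogonal'] using K.norm_sq_eq_add_norm_sq_starProjection y

section

variable {E F : Type*} [NormedAddCommGroup E] [InnerProductSpace ℝ E]
  [NormedAddCommGroup F] [InnerProductSpace ℝ F]

def IsApproxIsometryOn (ε : ℝ) (T : E →ₗ[ℝ] F) (U : Submodule ℝ E) : Prop :=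
  ∀ w ∈ U, (1 - ε) * ‖w‖ ≤ ‖T w‖ ∧ ‖T w‖ ≤ (1 + ε) * ‖w‖

namespace IsApproxIsometryOn

variable {ε : ℝ} {T : E →ₗ[ℝ] F} {U W : Submodule ℝ E} [W.HasOrthogonalProjection]
  [(W.map T).HasOrthogonalProjection] {v : E}

theorem abs_norm_sq_sub_le (hT : IsApproxIsometryOn ε T U) (hε0 : 0 ≤ ε) (hε1 : ε ≤ 1) {w : E}
    (hw : w ∈ U) : |‖T w‖ ^ 2 - ‖w‖ ^ 2| ≤ 3 * ε * ‖w‖ ^ 2 :=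
  abs_sq_sub_sq_le_of_mul_le_of_le_mul hε0 hε1 (norm_nonneg w) (hT w hw).1 (hT w hw).2

theorem norm_sub_starProjection_map_le (hT : IsApproxIsometryOn ε T U) (hWU : W ≤ U)
    (hv : v ∈ U) :
    ‖T v - (W.map T).starProjection (T v)‖ ≤ (1 + ε) * ‖v - W.starProjection v‖ := by
  have hp : W.starProjection v ∈ W := W.starProjection_apply_mem v
  calc ‖T v - (W.map T).starProjection (T v)‖ ≤ ‖T v - T (W.starProjection v)‖ :=
        (W.map T).norm_sub_starProjection_le _ (mem_map_of_mem hp)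
    _ = ‖T (v - W.starProjection v)‖ := by rw [map_sub]
    _ ≤ (1 + ε) * ‖v - W.starProjection v‖ := (hT _ (U.sub_mem hv (hWU hp))).2

theorem mul_norm_sub_starProjection_le (hT : IsApproxIsometryOn ε T U) (hε1 : ε ≤ 1)
    (hWU : W ≤ U) (hv : v ∈ U) :
    (1 - ε) * ‖v - W.starProjection v‖ ≤ ‖T v - (W.map T).starProjection (T v)‖ := by
  obtain ⟨w, hw, hTw⟩ := (W.map T).starProjection_apply_mem (T v)
  calc (1 - ε) * ‖v - W.starProjection v‖ ≤ (1 - ε) * ‖v - w‖ :=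
        mul_le_mul_of_nonneg_left (W.norm_sub_starProjection_le v hw) (by linarith)
    _ ≤ ‖T (v - w)‖ := (hT _ (U.sub_mem hv (hWU hw))).1
    _ = ‖T v - (W.map T).starProjection (T v)‖ := by rw [map_sub, hTw]

theorem abs_norm_sq_starProjection_map_sub_le (hT : IsApproxIsometryOn ε T U) (hε0 : 0 ≤ ε)
    (hε1 : ε ≤ 1) (hWU : W ≤ U) (hv : v ∈ U) :
    |‖(W.map T).starProjection (T v)‖ ^ 2 - ‖W.starProjection v‖ ^ 2| ≤ 6 * ε * ‖v‖ ^ 2 := by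
  have hnorm := hT.abs_norm_sq_sub_le hε0 hε1 hv
  have hdist := abs_sq_sub_sq_le_of_mul_le_of_le_mul hε0 hε1 (norm_nonneg _)
    (hT.mul_norm_sub_starProjection_le hε1 hWU hv) (hT.norm_sub_starProjection_map_le hWU hv)
  have hPv := W.norm_sq_eq_norm_starProjection_sq_add v
  have hPTv := (W.map T).norm_sq_eq_norm_starProjection_sq_add (T v)
  have hd_le : ‖v - W.starProjection v‖ ^ 2 ≤ ‖v‖ ^ 2 := by
    nlinarith [sq_nonneg ‖W.starProjection v‖]
  rw [abs_le] at hnorm hdist ⊢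
  constructor <;> nlinarith [mul_le_mul_of_nonneg_left hd_le hε0]

end IsApproxIsometryOn

end

/-- **Lemma 3 (Orthogonalizing the sketch, for matrix queries), coordinate-free form.**
Let `W` be a finite-dimensional subspace of a real inner product space `E`, let
`v₁, …, v_t ∈ E`, let `0 ≤ ε ≤ 1/2`, and let `T` be a linear map that is an
`ε`-isometry on each subspace `W + span{vᵢ}`. Then
`| Σᵢ ‖P_{T(W)}(T vᵢ)‖² − Σᵢ ‖P_W(vᵢ)‖² | ≤ 27ε · Σᵢ ‖vᵢ‖²`. -/
theorem sketched_projection_frobenius_close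
    {E F : Type*} [NormedAddCommGroup E] [InnerProductSpace ℝ E]
    [NormedAddCommGroup F] [InnerProductSpace ℝ F]
    (W : Submodule ℝ E) [FiniteDimensional ℝ W]
    {t : ℕ} (v : Fin t → E)
    (ε : ℝ) (hε0 : 0 ≤ ε) (hε1 : ε ≤ 1 / 2)
    (T : E →ₗ[ℝ] F)
    (hT : ∀ i : Fin t, ∀ w ∈ W ⊔ Submodule.span ℝ {v i},
      (1 - ε) * ‖w‖ ≤ ‖T w‖ ∧ ‖T w‖ ≤ (1 + ε) * ‖w‖) :
    abs ((∑ i, ‖(Submodule.orthogonalProjection (W.map T) (T (v i)) : F)‖ ^ 2)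
        - ∑ i, ‖(Submodule.orthogonalProjection W (v i) : E)‖ ^ 2)
      ≤ 27 * ε * ∑ i, ‖v i‖ ^ 2 := by
  have hcolumn (i : Fin t) :
      |‖(W.map T).starProjection (T (v i))‖ ^ 2 - ‖W.starProjection (v i)‖ ^ 2|
        ≤ 27 * ε * ‖v i‖ ^ 2 := by
    have h6 := IsApproxIsometryOn.abs_norm_sq_starProjection_map_sub_le (hT i) hε0
      (by linarith) le_sup_left (mem_sup_right (mem_span_singleton_self (v i)))
    nlinarith [mul_nonneg hε0 (sq_nonneg ‖v i‖)]
  simp only [coe_orthogonalProjectionOnto_apply]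
  rw [← Finset.sum_sub_distrib, Finset.mul_sum]
  exact (Finset.abs_sum_le_sum_abs _ _).trans (Finset.sum_le_sum fun i _ => hcolumn i)
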